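/- Urbantke formula. Let e⁰, e¹, e², e³ be covectors on ℝ⁴ whose component matrix E = (e^a_μ) satisfies det E > 0. Define η_{μν} = −e⁰_μ e⁰_ν + e¹_μ e¹_ν + e²_μ e²_ν + e³_μ e³_ν and Σ^i_{μν} = i(e⁰_μ e^i_ν − e⁰_ν e^i_μ) − Σ_{j,k} ε^{ijk} e^j_μ e^k_ν. Then (i/12) Σ_{i,j,k} Σ_{ρ,σ,α,β} ε^{ijk} Σ^i_{μρ} Σ^j_{νσ} Σ^k_{αβ} ε̃^{ρσαβ} = −(det E) · η_{μν} for all μ, ν, where ε̃^{ρσαβ} is the totally antisymmetric symbol on four indices with ε̃^{0123} = 1; note det E = √(−det η). -/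

import Mathlib

/-!
Write `Σ^i_{μν} = e^a_μ e^b_ν Σ₀^i_{ab}`, where `Σ₀^i` are the forms of the standard tetrad
`e^a_μ = δ^a_μ`. Since `e^a_ρ e^b_σ e^c_α e^d_β ε̃^{ρσαβ} = (det E) ε̃^{abcd}`, the left-hand side
equals `(det E) e^a_μ e^c_ν U_{ac}`, where `U` is the left-hand side for the standard tetrad.
The `Σ₀^i` are self-dual, `ε̃^{ρσαβ} Σ₀^i_{αβ} = -2i (η₀ Σ₀^i η₀)_{ρσ}` with `η₀ = diag(-1,1,1,1)`,
and with this a finite computation gives `U = -η₀`. Both claims then follow from `η = Eᵀ η₀ E`,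
which also gives `det η = -(det E)²`.
-/

open Matrix Complex

noncomputable section

namespace Urbantke

/-- The alternating symbol on three indices, `eps3 0 1 2 = 1`. -/
def eps3 (i j k : Fin 3) : ℝ :=
  ((j.val : ℝ) - i.val) * ((k.val : ℝ) - j.val) * ((k.val : ℝ) - i.val) / 2

/-- The alternating symbol on four indices, `eps4 0 1 2 3 = 1`. -/
def eps4 (a b c d : Fin 4) : ℝ :=
  ((b.val : ℝ) - a.val) * ((c.val : ℝ) - a.val) * ((d.val : ℝ) - a.val)
    * ((c.val : ℝ) - b.val) * ((d.val : ℝ) - b.val) * ((d.val : ℝ) - c.val) / 12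

/-- The Minkowski-signature metric `η_{μν} = −e⁰_μ e⁰_ν + Σ_i e^i_μ e^i_ν`. -/
def eta (E : Fin 4 → Fin 4 → ℝ) : Matrix (Fin 4) (Fin 4) ℝ := fun μ ν =>
  -(E 0 μ * E 0 ν) + E 1 μ * E 1 ν + E 2 μ * E 2 ν + E 3 μ * E 3 ν

/-- The self-dual 2-forms
`Σ^i_{μν} = i(e⁰_μ e^i_ν − e⁰_ν e^i_μ) − ε^{ijk} e^j_μ e^k_ν` for `i = 1,2,3`. -/
def Sig (E : Fin 4 → Fin 4 → ℝ) (i : Fin 3) (μ ν : Fin 4) : ℂ :=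
  Complex.I * ((E 0 μ : ℂ) * (E i.succ ν : ℂ) - (E 0 ν : ℂ) * (E i.succ μ : ℂ))
    - ∑ j, ∑ k, (eps3 i j k : ℂ) * (E j.succ μ : ℂ) * (E k.succ ν : ℂ)

lemma sum_comm_pairs {ι κ M : Type*} [Fintype ι] [Fintype κ] [AddCommMonoid M]
    (g : ι → ι → κ → κ → M) :
    ∑ a, ∑ b, ∑ c, ∑ d, g a b c d = ∑ c, ∑ d, ∑ a, ∑ b, g a b c d := by
  calc _ = ∑ a, ∑ c, ∑ d, ∑ b, g a b c d := by
        refine Finset.sum_congr rfl fun a _ => ?_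
        rw [Finset.sum_comm]
        exact Finset.sum_congr rfl fun c _ => Finset.sum_comm
    _ = _ := by
        rw [Finset.sum_comm]
        exact Finset.sum_congr rfl fun c _ => Finset.sum_comm

section Module

variable {M : Type*} [AddCommGroup M] [Module ℝ M]

lemma sum_eps3_smul (X : Fin 3 → Fin 3 → Fin 3 → M) :
    ∑ i, ∑ j, ∑ k, eps3 i j k • X i j k =
      X 0 1 2 + X 1 2 0 + X 2 0 1 - X 0 2 1 - X 2 1 0 - X 1 0 2 := by
  simp only [Fin.sum_univ_three]
  norm_num [eps3]
  abel

lemma sum_eps4_smul (X : Fin 4 → Fin 4 → Fin 4 → Fin 4 → M) :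
    ∑ ρ, ∑ σ, ∑ α, ∑ β, eps4 ρ σ α β • X ρ σ α β =
      X 0 1 2 3 - X 0 1 3 2 - X 0 2 1 3 + X 0 2 3 1 + X 0 3 1 2 - X 0 3 2 1
      - X 1 0 2 3 + X 1 0 3 2 + X 1 2 0 3 - X 1 2 3 0 - X 1 3 0 2 + X 1 3 2 0
      + X 2 0 1 3 - X 2 0 3 1 - X 2 1 0 3 + X 2 1 3 0 + X 2 3 0 1 - X 2 3 1 0
      - X 3 0 1 2 + X 3 0 2 1 + X 3 1 0 2 - X 3 1 2 0 - X 3 2 0 1 + X 3 2 1 0 := by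
  simp only [Fin.sum_univ_four]
  norm_num [eps4, show ((3 : Fin 4) : ℕ) = 3 from rfl]
  abel

end Module

section Algebra

variable {R : Type*} [CommRing R] [Algebra ℝ R]

lemma sum_eps4_smul_mul_eq_det (u v w x : Fin 4 → R) :
    ∑ ρ, ∑ σ, ∑ α, ∑ β, eps4 ρ σ α β • (u ρ * v σ * w α * x β) = (of ![u, v, w, x]).det := by
  rw [sum_eps4_smul, det_succ_row_zero]
  simp [Fin.sum_univ_four, det_fin_three, Fin.succAbove]
  ring

lemma sum_eps4_smul_mul_rows (P : Matrix (Fin 4) (Fin 4) R) (a b c d : Fin 4) :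
    ∑ ρ, ∑ σ, ∑ α, ∑ β, eps4 ρ σ α β • (P a ρ * P b σ * P c α * P d β) =
      eps4 a b c d • P.det := by
  have hrows (Q : Matrix (Fin 4) (Fin 4) R) :
      of ![Q a, Q b, Q c, Q d] = Q.submatrix ![a, b, c, d] id := by
    ext i j
    fin_cases i <;> rfl
  have hsub : P.submatrix ![a, b, c, d] id =
      (1 : Matrix (Fin 4) (Fin 4) R).submatrix ![a, b, c, d] id * P := by
    simpa using submatrix_mul 1 P ![a, b, c, d] id id Function.bijective_id
  have hperm : ((1 : Matrix (Fin 4) (Fin 4) R).submatrix ![a, b, c, d] id).det =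
      eps4 a b c d • 1 := by
    rw [← hrows, ← sum_eps4_smul_mul_eq_det]
    simp [one_apply]
  rw [sum_eps4_smul_mul_eq_det, hrows, hsub, det_mul, hperm, smul_one_mul]

def epsDual (C : Matrix (Fin 4) (Fin 4) R) : Matrix (Fin 4) (Fin 4) R :=
  of fun ρ σ => ∑ α, ∑ β, eps4 ρ σ α β • C α β

lemma sum_mul_mul_mul_eps4 (A B C : Matrix (Fin 4) (Fin 4) R) (μ ν : Fin 4) :
    ∑ ρ, ∑ σ, ∑ α, ∑ β, A μ ρ * B ν σ * C α β * algebraMap ℝ R (eps4 ρ σ α β) =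
      (A * epsDual C * Bᵀ) μ ν := by
  simp only [mul_apply, transpose_apply, epsDual, of_apply, Finset.sum_mul, Finset.mul_sum,
    Algebra.smul_def]
  rw [Finset.sum_comm]
  refine Finset.sum_congr rfl fun ρ _ => Finset.sum_congr rfl fun σ _ =>
    Finset.sum_congr rfl fun α _ => Finset.sum_congr rfl fun β _ => ?_
  ring

lemma epsDual_transpose_mul_mul_apply (P C : Matrix (Fin 4) (Fin 4) R) (ρ σ : Fin 4) :
    epsDual (Pᵀ * C * P) ρ σ =
      ∑ e, ∑ f, C e f * ∑ α, ∑ β, eps4 ρ σ α β • (P e α * P f β) := by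
  simp only [epsDual, of_apply, mul_apply, transpose_apply, Finset.sum_mul, Finset.mul_sum,
    Finset.smul_sum]
  rw [sum_comm_pairs, Finset.sum_comm]
  refine Finset.sum_congr rfl fun e _ => Finset.sum_congr rfl fun f _ =>
    Finset.sum_congr rfl fun α _ => Finset.sum_congr rfl fun β _ => ?_
  simp only [Algebra.smul_def]
  ring

lemma mul_epsDual_transpose_mul_mul (P C : Matrix (Fin 4) (Fin 4) R) :
    P * epsDual (Pᵀ * C * P) * Pᵀ = P.det • epsDual C := by
  ext a c
  calc (P * epsDual (Pᵀ * C * P) * Pᵀ) a c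
      = ∑ ρ, ∑ σ, ∑ e, ∑ f,
          C e f * ∑ α, ∑ β, eps4 ρ σ α β • (P a ρ * P c σ * P e α * P f β) := by
        simp only [mul_apply, transpose_apply, epsDual_transpose_mul_mul_apply, Finset.sum_mul,
          Finset.mul_sum]
        rw [Finset.sum_comm]
        refine Finset.sum_congr rfl fun ρ _ => Finset.sum_congr rfl fun σ _ =>
          Finset.sum_congr rfl fun e _ => Finset.sum_congr rfl fun f _ =>
          Finset.sum_congr rfl fun α _ => Finset.sum_congr rfl fun β _ => ?_
        simp only [Algebra.smul_def]
        ring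
    _ = ∑ e, ∑ f, C e f * (eps4 a c e f • P.det) := by
        simp only [← sum_eps4_smul_mul_rows, Finset.mul_sum]
        exact sum_comm_pairs _
    _ = (P.det • epsDual C) a c := by
        simp only [Matrix.smul_apply, epsDual, of_apply, smul_eq_mul, Algebra.smul_def,
          Finset.mul_sum]
        refine Finset.sum_congr rfl fun e _ => Finset.sum_congr rfl fun f _ => ?_
        ring

lemma transpose_mul_mul_epsDual (P A B C : Matrix (Fin 4) (Fin 4) R) :
    (Pᵀ * A * P) * epsDual (Pᵀ * C * P) * (Pᵀ * B * P)ᵀ =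
      P.det • (Pᵀ * (A * epsDual C * Bᵀ) * P) := by
  calc (Pᵀ * A * P) * epsDual (Pᵀ * C * P) * (Pᵀ * B * P)ᵀ
      = Pᵀ * A * (P * epsDual (Pᵀ * C * P) * Pᵀ) * Bᵀ * P := by
        simp only [transpose_mul, transpose_transpose, Matrix.mul_assoc]
    _ = P.det • (Pᵀ * (A * epsDual C * Bᵀ) * P) := by
        rw [mul_epsDual_transpose_mul_mul]
        simp only [Matrix.mul_smul, Matrix.smul_mul, Matrix.mul_assoc]

end Algebra

/-- `sigmaStd i = Sig (1 : Matrix (Fin 4) (Fin 4) ℝ) i`, the forms `Σ₀^i` of the standard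
tetrad. -/
def sigmaStd : Fin 3 → Matrix (Fin 4) (Fin 4) ℂ :=
  ![!![0, I, 0, 0; -I, 0, 0, 0; 0, 0, 0, -1; 0, 0, 1, 0],
    !![0, 0, I, 0; 0, 0, 0, 1; -I, 0, 0, 0; 0, -1, 0, 0],
    !![0, 0, 0, I; 0, 0, -1, 0; 0, 1, 0, 0; -I, 0, 0, 0]]

lemma of_Sig_eq (E : Fin 4 → Fin 4 → ℝ) (i : Fin 3) :
    of (Sig E i) = ((of E).map ofReal)ᵀ * sigmaStd i * (of E).map ofReal := by
  ext μ ν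
  fin_cases i <;>
    simp [Sig, mul_apply, Fin.sum_univ_four, Fin.sum_univ_three, eps3, sigmaStd] <;> ring

lemma sigmaStd_transpose (i : Fin 3) : (sigmaStd i)ᵀ = -sigmaStd i := by
  ext a b
  fin_cases i <;> fin_cases a <;> fin_cases b <;> simp [sigmaStd]

lemma epsDual_sigmaStd (k : Fin 3) :
    epsDual (sigmaStd k) =
      (-2 * I) • (diagonal ![-1, 1, 1, 1] * sigmaStd k * diagonal ![-1, 1, 1, 1]) := by
  ext ρ σ
  fin_cases k <;> fin_cases ρ <;> fin_cases σ <;>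
    simp [epsDual, Fin.sum_univ_four, sigmaStd] <;>
    norm_num [eps4, show ((3 : Fin 4) : ℕ) = 3 from rfl] <;> ring_nf <;> simp

lemma diagonal_minkowski :
    (diagonal ![-1, 1, 1, 1] : Matrix (Fin 4) (Fin 4) ℂ) =
      !![-1, 0, 0, 0; 0, 1, 0, 0; 0, 0, 1, 0; 0, 0, 0, 1] := by
  ext i j
  fin_cases i <;> fin_cases j <;> rfl

lemma smul_sum_eps3_sigmaStd :
    (I / 12) • ∑ i, ∑ j, ∑ k,
        eps3 i j k • (sigmaStd i * epsDual (sigmaStd k) * (sigmaStd j)ᵀ) =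
      -diagonal ![-1, 1, 1, 1] := by
  simp only [epsDual_sigmaStd, sigmaStd_transpose, sum_eps3_smul, diagonal_minkowski]
  simp [sigmaStd]
  ring_nf
  norm_num [I_sq, ← Matrix.zero_empty]

lemma eta_eq (E : Fin 4 → Fin 4 → ℝ) :
    eta E = (of E)ᵀ * diagonal ![-1, 1, 1, 1] * of E := by
  ext μ ν
  simp [eta, mul_apply, Fin.sum_univ_four]

lemma det_eta (E : Fin 4 → Fin 4 → ℝ) : (eta E).det = -(of E).det ^ 2 := by
  simp only [eta_eq, det_mul, det_transpose, det_diagonal, Fin.prod_univ_four, Fin.isValue,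
    cons_val_zero, cons_val_one, cons_val, mul_one, mul_neg, neg_mul, neg_inj]
  ring

lemma smul_sum_eps3_Sig (E : Fin 4 → Fin 4 → ℝ) :
    (I / 12) • ∑ i, ∑ j, ∑ k,
        eps3 i j k • (of (Sig E i) * epsDual (of (Sig E k)) * (of (Sig E j))ᵀ) =
      -((of E).det : ℂ) • (eta E).map ofReal := by
  let P := (of E).map ofReal
  calc _ = P.det • (Pᵀ * ((I / 12) • ∑ i, ∑ j, ∑ k,
        eps3 i j k • (sigmaStd i * epsDual (sigmaStd k) * (sigmaStd j)ᵀ)) * P) := by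
        simp only [of_Sig_eq, transpose_mul_mul_epsDual, Finset.smul_sum, Matrix.mul_sum,
          Matrix.sum_mul, Matrix.mul_smul, Matrix.smul_mul, smul_comm P.det, P]
    _ = -((of E).det : ℂ) • (eta E).map ofReal := by
        have hdet : P.det = ((of E).det : ℂ) := (ofRealHom.map_det (of E)).symm
        rw [smul_sum_eps3_sigmaStd, hdet, eta_eq]
        ext μ ν
        simp [P, mul_apply, Fin.sum_univ_four, diagonal]
        ring

/-- Urbantke formula:
`(i/12) ε^{ijk} Σ^i_{μρ} Σ^j_{νσ} Σ^k_{αβ} ε̃^{ρσαβ} = −(det E) η_{μν}`,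
together with `det E = √(−det η)`. -/
theorem urbantke_formula (E : Fin 4 → Fin 4 → ℝ)
    (hE : 0 < (Matrix.of E).det) :
    (∀ μ ν : Fin 4,
      (Complex.I / 12) * ∑ i, ∑ j, ∑ k, ∑ ρ, ∑ σ, ∑ α, ∑ β,
        (eps3 i j k : ℂ) * Sig E i μ ρ * Sig E j ν σ * Sig E k α β * (eps4 ρ σ α β : ℂ)
      = -((Matrix.of E).det : ℂ) * (eta E μ ν : ℂ)) ∧
    (Matrix.of E).det = Real.sqrt (-(eta E).det) := by
  refine ⟨fun μ ν => ?_, by rw [det_eta, neg_neg, Real.sqrt_sq hE.le]⟩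
  calc _ = (I / 12) * ∑ i, ∑ j, ∑ k,
        (eps3 i j k : ℂ) * (of (Sig E i) * epsDual (of (Sig E k)) * (of (Sig E j))ᵀ) μ ν := by
        simp only [← sum_mul_mul_mul_eps4, Finset.mul_sum, mul_assoc, Complex.coe_algebraMap,
          of_apply]
    _ = _ := by
        simpa [Matrix.sum_apply, Complex.real_smul] using
          congrFun (congrFun (smul_sum_eps3_Sig E) μ) ν

end Urbantke
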